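/- arXiv:2107.05692 — 4 statements merged into one kernel-verified Lean document; each statement's English description precedes it below -/
import Mathlib

section
/- For any submodule A of V, any finite index types I and J, and any families P, Q of orthogonal projections that are coset-invariant for A, the matrix Π^A[P,Q] is an orthogonal projection: it is Hermitian and satisfies Π^A[P,Q] · Π^A[P,Q] = Π^A[P,Q]. -/
open scoped BigOperators Kronecker Classical ComplexOrder

noncomputable section

/-- The vector space `F₂ⁿ`. -/
abbrev V (n : ℕ) : Type := Fin n → ZMod 2

/-- The standard bilinear pairing `⟨x,y⟩ = ∑ i, xᵢ * yᵢ` on `F₂ⁿ`. -/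
def pairing {n : ℕ} (x y : V n) : ZMod 2 := ∑ i, x i * y i

/-- `(−1)^b ∈ ℂ` for `b : ZMod 2`. -/
def sign (b : ZMod 2) : ℂ := if b = 0 then 1 else -1

lemma pairing_add_right {n : ℕ} (x y z : V n) :
    pairing x (y + z) = pairing x y + pairing x z := by
  simp [pairing, mul_add, Finset.sum_add_distrib]

lemma pairing_smul_right {n : ℕ} (c : ZMod 2) (x y : V n) :
    pairing x (c • y) = c * pairing x y := by
  simp only [pairing, Pi.smul_apply, smul_eq_mul, Finset.mul_sum]
  exact Finset.sum_congr rfl fun i _ => by ring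

/-- The orthogonal complement `A^⊥ = {y | ∀ a ∈ A, ⟨a,y⟩ = 0}`. -/
def perp {n : ℕ} (A : Submodule (ZMod 2) (V n)) : Submodule (ZMod 2) (V n) where
  carrier := {y | ∀ a ∈ A, pairing a y = 0}
  zero_mem' := by
    simp only [Set.mem_setOf_eq]
    intro a _
    simp [pairing]
  add_mem' := by
    intro y z hy hz
    simp only [Set.mem_setOf_eq] at *
    intro a ha
    rw [pairing_add_right, hy a ha, hz a ha, add_zero]
  smul_mem' := by
    intro c y hy
    simp only [Set.mem_setOf_eq] at *
    intro a ha
    rw [pairing_smul_right, hy a ha, mul_zero]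

/-- The coset `A + s = {a + s : a ∈ A}`. -/
def coset {n : ℕ} (A : Submodule (ZMod 2) (V n)) (s : V n) : Set (V n) :=
  {v | ∃ a ∈ A, v = a + s}

noncomputable instance {n : ℕ} (A : Submodule (ZMod 2) (V n)) : Fintype A :=
  Fintype.ofFinite _

/-- The coset state `|A_{s,s'}⟩ = |A|^{−1/2} ∑_{a ∈ A} (−1)^{⟨a,s'⟩} e_{a+s}`. -/
noncomputable def cosetState {n : ℕ} (A : Submodule (ZMod 2) (V n)) (s s' : V n) :
    EuclideanSpace ℂ (V n) :=
  ((Real.sqrt (Nat.card A) : ℂ))⁻¹ •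
    ∑ a : A, sign (pairing (a : V n) s') • EuclideanSpace.single ((a : V n) + s) (1 : ℂ)

/-- A family of orthogonal projections: each member is Hermitian and idempotent. -/
def IsProjFamily {ι m : Type*} [Fintype m] (P : ι → Matrix m m ℂ) : Prop :=
  ∀ p, (P p).IsHermitian ∧ P p * P p = P p

/-- Coset invariance of a family indexed by pairs `(s, s')`:
the value depends only on the pair of cosets `(A + s, A^⊥ + s')`. -/
def CosetInvariant {n : ℕ} {α : Type*} (A : Submodule (ZMod 2) (V n))
    (F : V n × V n → α) : Prop :=
  ∀ s₁ s₁' s₂ s₂' : V n, coset A s₁ = coset A s₂ →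
    coset (perp A) s₁' = coset (perp A) s₂' → F (s₁, s₁') = F (s₂, s₂')

/-- The rank-one matrix `|A_{s,s'}⟩⟨A_{s,s'}|`. -/
noncomputable def outer {n : ℕ} (A : Submodule (ZMod 2) (V n)) (s s' : V n) :
    Matrix (V n) (V n) ℂ :=
  Matrix.of fun x y => cosetState A s s' x * (starRingEnd ℂ) (cosetState A s s' y)

/-- `Π^A[P,Q] = 2^{−n} ∑_{s,s'} |A_{s,s'}⟩⟨A_{s,s'}| ⊗ P(s,s') ⊗ Q(s,s')`. -/
noncomputable def PiMat {n : ℕ} {I J : Type*} [Fintype I] [Fintype J]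
    (A : Submodule (ZMod 2) (V n)) (P : V n × V n → Matrix I I ℂ)
    (Q : V n × V n → Matrix J J ℂ) : Matrix (V n × I × J) (V n × I × J) ℂ :=
  ((2 : ℂ) ^ n)⁻¹ • ∑ s : V n, ∑ s' : V n, (outer A s s') ⊗ₖ (P (s, s') ⊗ₖ Q (s, s'))

/-- The `ℓ² → ℓ²` operator norm of a complex square matrix. -/
noncomputable def opNorm {m : Type*} [Fintype m] [DecidableEq m] (M : Matrix m m ℂ) : ℝ :=
  ‖Matrix.toEuclideanCLM (𝕜 := ℂ) M‖

/-! Each summand `T(s,s') = |A_{s,s'}⟩⟨A_{s,s'}| ⊗ P(s,s') ⊗ Q(s,s')` is Hermitian. Two coset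
states agree up to a sign when their index pairs lie in the same coset pair `(A + s, A^⊥ + s')`,
and are orthogonal otherwise: either their supports `A + s` are disjoint, or their inner product
is the sum over `A` of a nontrivial character. Hence `T p * T q` is `T p` for indices in the same
coset pair and `0` otherwise, and since every coset pair holds `|A| * |A^⊥| = 2ⁿ` indices,
`(∑ T)² = 2ⁿ ∑ T`. -/

open Matrix Module
open scoped Finset

lemma ZMod.eq_zero_or_eq_one (b : ZMod 2) : b = 0 ∨ b = 1 := by
  revert b; decide

lemma Matrix.IsHermitian.kronecker {R l m : Type*} [CommRing R] [StarRing R]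
    {M : Matrix l l R} {N : Matrix m m R} (hM : M.IsHermitian) (hN : N.IsHermitian) :
    (M ⊗ₖ N).IsHermitian := by
  rw [IsHermitian, conjTranspose_kronecker, hM, hN]

lemma smul_sum_mul_self_of_mul_eq_ite {ι R M : Type*} [Fintype ι] [Field R] [Ring M]
    [Module R M] [IsScalarTower R M M] [SMulCommClass R M M] (T : ι → M) (r : ι → ι → Prop)
    [DecidableRel r] {c : ℕ} (hc : (c : R) ≠ 0) (hT : ∀ i j, T i * T j = if r i j then T i else 0)
    (hcard : ∀ i, #{j | r i j} = c) :
    ((c : R)⁻¹ • ∑ i, T i) * ((c : R)⁻¹ • ∑ i, T i) = (c : R)⁻¹ • ∑ i, T i := by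
  have hrow (i : ι) : ∑ j, T i * T j = (c : R) • T i := by
    simp only [hT, ← Finset.sum_filter, Finset.sum_const, hcard, Nat.cast_smul_eq_nsmul]
  rw [smul_mul_smul_comm, Finset.sum_mul_sum, Finset.sum_congr rfl fun i _ => hrow i,
    ← Finset.smul_sum, smul_smul, inv_mul_cancel_right₀ hc]

lemma star_inv_sqrt_mul_inv_sqrt (k : ℕ) : star (√k : ℂ)⁻¹ * (√k : ℂ)⁻¹ = (k : ℂ)⁻¹ := by
  rw [star_inv₀, Complex.star_def, Complex.conj_ofReal, ← mul_inv, ← Complex.ofReal_mul,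
    Real.mul_self_sqrt (Nat.cast_nonneg _), Complex.ofReal_natCast]

section Sign

lemma sign_add (b c : ZMod 2) : sign (b + c) = sign b * sign c := by
  rcases b.eq_zero_or_eq_one with rfl | rfl <;> rcases c.eq_zero_or_eq_one with rfl | rfl <;>
    simp [sign, show (1 + 1 : ZMod 2) = 0 from rfl]

lemma sign_eq_one_iff_eq_zero {b : ZMod 2} : sign b = 1 ↔ b = 0 := by
  rcases b.eq_zero_or_eq_one with rfl | rfl <;> norm_num [sign]

lemma sign_mul_self_eq_one (b : ZMod 2) : sign b * sign b = 1 := by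
  rw [← sign_add, CharTwo.add_self_eq_zero, sign_eq_one_iff_eq_zero]

lemma star_sign (b : ZMod 2) : star (sign b) = sign b := by
  unfold sign; split_ifs <;> simp

end Sign

section CosetStates
variable {n : ℕ} (A : Submodule (ZMod 2) (V n))

lemma V.add_self (x : V n) : x + x = 0 :=
  funext fun i => CharTwo.add_self_eq_zero (x i)

lemma V.add_add_add_cancel (x y z : V n) : x + y + (y + z) = x + z := by
  rw [add_assoc, ← add_assoc y, V.add_self, zero_add]

lemma V.eq_add_iff_add_eq {x y z : V n} : x = y + z ↔ x + z = y := by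
  constructor <;> rintro rfl <;> rw [add_assoc, V.add_self, add_zero]

lemma pairing_add_left (x y z : V n) : pairing (x + y) z = pairing x z + pairing y z :=
  add_dotProduct x y z

variable {A} in
lemma coset_eq_of_add_mem {s₁ s₂ : V n} (h : s₁ + s₂ ∈ A) : coset A s₁ = coset A s₂ := by
  have subset : ∀ {s t : V n}, s + t ∈ A → coset A s ⊆ coset A t := by
    rintro s t hst _ ⟨a, ha, rfl⟩
    exact ⟨a + (s + t), A.add_mem ha hst, by rw [add_assoc, add_assoc, V.add_self, add_zero]⟩
  exact (subset h).antisymm (subset (add_comm s₁ s₂ ▸ h))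

variable {A} in
lemma CosetInvariant.apply_eq_of_add_mem {α : Type*} {F : V n × V n → α}
    (hF : CosetInvariant A F) {p q : V n × V n} (h : p.1 + q.1 ∈ A ∧ p.2 + q.2 ∈ perp A) :
    F q = F p :=
  (hF p.1 p.2 q.1 q.2 (coset_eq_of_add_mem h.1) (coset_eq_of_add_mem h.2)).symm

lemma card_filter_add_mem (s : V n) : #{t | s + t ∈ A} = Nat.card A := by
  rw [Nat.card_eq_fintype_card, ← Fintype.card_subtype]
  exact Fintype.card_congr ((Equiv.addLeft s).subtypeEquiv fun _ => Iff.rfl)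

lemma perp_eq_comap_dualAnnihilator :
    perp A = A.dualAnnihilator.comap (dotProductEquiv (ZMod 2) (Fin n)).toLinearMap := by
  ext y
  simp only [perp, Submodule.mem_comap, Submodule.mem_dualAnnihilator, LinearEquiv.coe_coe,
    dotProductEquiv_apply_apply, dotProduct_comm y]
  rfl

lemma card_mul_card_perp : Nat.card A * Nat.card (perp A) = 2 ^ n := by
  have hrank : finrank (ZMod 2) A + finrank (ZMod 2) (perp A) = n := by
    rw [perp_eq_comap_dualAnnihilator, Submodule.comap_equiv_eq_map_symm,
      LinearEquiv.finrank_map_eq, Subspace.finrank_add_finrank_dualAnnihilator_eq,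
      finrank_fin_fun]
  have hcard (W : Submodule (ZMod 2) (V n)) : Nat.card W = 2 ^ finrank (ZMod 2) W := by
    rw [Nat.card_eq_fintype_card, card_eq_pow_finrank (K := ZMod 2) (V := W), ZMod.card]
  rw [hcard, hcard, ← pow_add, hrank]

lemma card_filter_add_mem_and_add_mem_perp (p : V n × V n) :
    #{q : V n × V n | p.1 + q.1 ∈ A ∧ p.2 + q.2 ∈ perp A} = 2 ^ n := by
  rw [← card_mul_card_perp A, ← card_filter_add_mem A p.1, ← card_filter_add_mem (perp A) p.2,
    ← Finset.card_product, ← Finset.filter_product, Finset.univ_product_univ]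

def pairingChar (t : V n) : AddChar A ℂ where
  toFun a := sign (pairing a t)
  map_zero_eq_one' := by simp [pairing, sign]
  map_add_eq_mul' a b := by rw [Submodule.coe_add, pairing_add_left, sign_add]

lemma sum_sign_pairing (t : V n) :
    ∑ a : A, sign (pairing a t) = if t ∈ perp A then (Nat.card A : ℂ) else 0 := by
  have hzero : pairingChar A t = 0 ↔ t ∈ perp A := by
    simp only [AddChar.eq_zero_iff, pairingChar, AddChar.coe_mk, sign_eq_one_iff_eq_zero,
      Subtype.forall]
    rfl
  calc ∑ a : A, sign (pairing a t) = ∑ a, pairingChar A t a := rfl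
    _ = _ := by rw [AddChar.sum_eq_ite, Nat.card_eq_fintype_card]; simp only [hzero]

lemma cosetState_apply (s s' z : V n) :
    cosetState A s s' z =
      (√(Nat.card A) : ℂ)⁻¹ * if z + s ∈ A then sign (pairing (z + s) s') else 0 := by
  simp only [cosetState, WithLp.ofLp_smul, WithLp.ofLp_sum, Pi.smul_apply, Finset.sum_apply,
    EuclideanSpace.single, PiLp.single_apply, V.eq_add_iff_add_eq, smul_eq_mul]
  rw [← Finset.sum_subtype {x | x ∈ A} (p := (· ∈ A)) (by simp)
    fun x => sign (pairing x s') * if z + s = x then 1 else 0]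
  simp [Finset.sum_ite_eq]

variable {A} in
lemma cosetState_apply_of_notMem (s' : V n) {s z : V n} (h : z + s ∉ A) :
    cosetState A s s' z = 0 := by
  rw [cosetState_apply, if_neg h, mul_zero]

variable {A} in
lemma cosetState_eq_sign_smul {s₁ s₂ s₁' s₂' : V n} (h : s₁ + s₂ ∈ A)
    (h' : s₁' + s₂' ∈ perp A) :
    cosetState A s₂ s₂' = sign (pairing (s₁ + s₂) s₂') • cosetState A s₁ s₁' := by
  ext z
  have hz : z + s₂ = (z + s₁) + (s₁ + s₂) := (V.add_add_add_cancel z s₁ s₂).symm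
  rw [PiLp.smul_apply, smul_eq_mul, cosetState_apply, cosetState_apply, hz,
    A.add_mem_iff_left h]
  split_ifs with hmem
  · have hs' : pairing (z + s₁) s₂' = pairing (z + s₁) s₁' := by
      have : s₂' = s₁' + (s₁' + s₂') := by rw [← add_assoc, V.add_self, zero_add]
      rw [this, pairing_add_right, h' _ hmem, add_zero]
    rw [pairing_add_left, hs', sign_add]
    ring
  · simp

lemma star_cosetState_dotProduct_cosetState (s s₁' s₂' : V n) :
    star (cosetState A s s₁').ofLp ⬝ᵥ (cosetState A s s₂').ofLp =
      if s₁' + s₂' ∈ perp A then 1 else 0 := by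
  have hterm (z : V n) : star (cosetState A s s₁' z) * cosetState A s s₂' z =
      (Nat.card A : ℂ)⁻¹ * if z + s ∈ A then sign (pairing (z + s) (s₁' + s₂')) else 0 := by
    rw [cosetState_apply, cosetState_apply]
    split_ifs
    · rw [star_mul', star_sign, mul_mul_mul_comm, star_inv_sqrt_mul_inv_sqrt,
        pairing_add_right, sign_add]
    · simp
  have hsum : ∑ z, (if z + s ∈ A then sign (pairing (z + s) (s₁' + s₂')) else 0) =
      ∑ a : A, sign (pairing a (s₁' + s₂')) := by
    calc _ = ∑ w, if w ∈ A then sign (pairing w (s₁' + s₂')) else 0 :=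
          Fintype.sum_equiv (Equiv.addRight s) _ _ fun _ => rfl
      _ = _ := by rw [← Finset.sum_filter]; exact Finset.sum_subtype _ (by simp) _
  simp only [dotProduct, Pi.star_apply, hterm, ← Finset.mul_sum]
  rw [hsum, sum_sign_pairing]
  split_ifs
  · exact inv_mul_cancel₀ (Nat.cast_ne_zero.mpr Nat.card_pos.ne')
  · exact mul_zero _

lemma star_cosetState_dotProduct_cosetState_self (s s' : V n) :
    star (cosetState A s s').ofLp ⬝ᵥ (cosetState A s s').ofLp = 1 := by
  rw [star_cosetState_dotProduct_cosetState, if_pos (V.add_self s' ▸ (perp A).zero_mem)]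

variable {A} in
lemma star_cosetState_dotProduct_cosetState_eq_zero {s₁ s₂ s₁' s₂' : V n}
    (h : ¬(s₁ + s₂ ∈ A ∧ s₁' + s₂' ∈ perp A)) :
    star (cosetState A s₁ s₁').ofLp ⬝ᵥ (cosetState A s₂ s₂').ofLp = 0 := by
  by_cases hs : s₁ + s₂ ∈ A
  · have hs' : s₁' + s₂' ∉ perp A := fun hs' => h ⟨hs, hs'⟩
    rw [cosetState_eq_sign_smul hs (V.add_self s₂' ▸ (perp A).zero_mem), WithLp.ofLp_smul,
      dotProduct_smul, star_cosetState_dotProduct_cosetState, if_neg hs', smul_zero]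
  · refine Finset.sum_eq_zero fun z _ => ?_
    by_cases hz : z + s₁ ∈ A
    · have hsum : z + s₁ + (z + s₂) = s₁ + s₂ := by rw [add_comm z s₁, V.add_add_add_cancel]
      have hz' : z + s₂ ∉ A := fun hz' => hs (hsum ▸ A.add_mem hz hz')
      rw [cosetState_apply_of_notMem s₂' hz', mul_zero]
    · rw [Pi.star_apply, cosetState_apply_of_notMem s₁' hz, star_zero, zero_mul]

lemma outer_eq_vecMulVec (s s' : V n) :
    outer A s s' = vecMulVec (cosetState A s s').ofLp (star (cosetState A s s').ofLp) :=
  rfl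

lemma outer_isHermitian (s s' : V n) : (outer A s s').IsHermitian :=
  (posSemidef_vecMulVec_self_star _).isHermitian

variable {A} in
lemma outer_eq_of_add_mem {s₁ s₂ s₁' s₂' : V n} (h : s₁ + s₂ ∈ A) (h' : s₁' + s₂' ∈ perp A) :
    outer A s₂ s₂' = outer A s₁ s₁' := by
  rw [outer_eq_vecMulVec, outer_eq_vecMulVec, cosetState_eq_sign_smul h h', WithLp.ofLp_smul,
    star_smul, star_sign, smul_vecMulVec, vecMulVec_smul, smul_smul, sign_mul_self_eq_one,
    one_smul]

lemma outer_mul_outer (s₁ s₂ s₁' s₂' : V n) :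
    outer A s₁ s₁' * outer A s₂ s₂' =
      if s₁ + s₂ ∈ A ∧ s₁' + s₂' ∈ perp A then outer A s₁ s₁' else 0 := by
  split_ifs with h
  · rw [outer_eq_of_add_mem h.1 h.2, outer_eq_vecMulVec, vecMulVec_mul_vecMulVec,
      star_cosetState_dotProduct_cosetState_self, one_smul]
  · rw [outer_eq_vecMulVec, outer_eq_vecMulVec, vecMulVec_mul_vecMulVec,
      star_cosetState_dotProduct_cosetState_eq_zero h, zero_smul, vecMulVec_zero]

end CosetStates

/-- For coset-invariant families of orthogonal projections, `Π^A[P,Q]` is an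
orthogonal projection: Hermitian and idempotent. -/
theorem PiMat_isOrthogonalProjection
    {n : ℕ} {I J : Type} [Fintype I] [Fintype J]
    (A : Submodule (ZMod 2) (V n))
    (P : V n × V n → Matrix I I ℂ) (Q : V n × V n → Matrix J J ℂ)
    (hPproj : IsProjFamily P) (hPinv : CosetInvariant A P)
    (hQproj : IsProjFamily Q) (hQinv : CosetInvariant A Q) :
    (PiMat A P Q).IsHermitian ∧ PiMat A P Q * PiMat A P Q = PiMat A P Q := by
  set T : V n × V n → Matrix (V n × I × J) (V n × I × J) ℂ :=
    fun p => outer A p.1 p.2 ⊗ₖ (P p ⊗ₖ Q p)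
  have hPiMat : PiMat A P Q = ((2 ^ n : ℕ) : ℂ)⁻¹ • ∑ p, T p := by
    rw [PiMat, Fintype.sum_prod_type, Nat.cast_pow, Nat.cast_ofNat]
  have hT_mul (p q : V n × V n) :
      T p * T q = if p.1 + q.1 ∈ A ∧ p.2 + q.2 ∈ perp A then T p else 0 := by
    simp only [T, ← mul_kronecker_mul, outer_mul_outer]
    split_ifs with h
    · rw [hPinv.apply_eq_of_add_mem h, hQinv.apply_eq_of_add_mem h, (hPproj p).2, (hQproj p).2]
    · rw [zero_kronecker]
  have hT_herm (p : V n × V n) : (T p).IsHermitian :=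
    (outer_isHermitian A p.1 p.2).kronecker ((hPproj p).1.kronecker (hQproj p).1)
  rw [hPiMat]
  refine ⟨IsHermitian.smul ?_ (IsSelfAdjoint.natCast _).inv₀,
    smul_sum_mul_self_of_mul_eq_ite T _ (by positivity) hT_mul
      (card_filter_add_mem_and_add_mem_perp A)⟩
  exact isHermitian_iff_isSelfAdjoint.mpr <|
    isSelfAdjoint_sum _ fun p _ => (hT_herm p).isSelfAdjoint
end
end

section
/- Let d and N be positive integers, let A₁,…,A_N be positive semidefinite complex d×d matrices, and let π₁,…,π_N be N mutually orthogonal permutations of Fin N. Then ‖ ∑_{i=1}^N Aᵢ ‖ ≤ ∑_{k=1}^N max_{i ∈ Fin N} ‖ √(Aᵢ) · √(A_{πₖ(i)}) ‖. -/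
/-!
Write `Sᵢ = √Aᵢ`, so that `T = ∑ Aᵢ = ∑ Sᵢ²` with every `Sᵢ` Hermitian, and for a vector `v` put
`wᵢ = ‖Sᵢ v‖`; then `⟪v, T v⟫ = ∑ wᵢ²`. Expanding,
`‖T v‖² = ∑ᵢⱼ ⟪Sᵢ v, Sᵢ Sⱼ (Sⱼ v)⟫ ≤ ∑ᵢⱼ ‖Sᵢ Sⱼ‖ wᵢ wⱼ`. Mutual orthogonality means that for each
`i` the map `k ↦ πₖ i` is a bijection, so the pairs `(i, j)` are exactly the pairs `(i, πₖ i)`, and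
the rearrangement inequality `∑ᵢ wᵢ w_{πₖ i} ≤ ∑ᵢ wᵢ²` yields `‖T v‖² ≤ C ⟪v, T v⟫ ≤ C ‖v‖ ‖T v‖`
with `C = ∑ₖ maxᵢ ‖Sᵢ S_{πₖ i}‖`.
-/

open scoped BigOperators ComplexOrder

noncomputable section

/-- The positive semidefinite square root of a positive semidefinite matrix
(the definition removed from Mathlib, restated verbatim). -/
noncomputable def Matrix.PosSemidef.sqrt {n 𝕜 : Type*} [Fintype n] [DecidableEq n] [RCLike 𝕜]
    {A : Matrix n n 𝕜} (hA : A.PosSemidef) : Matrix n n 𝕜 :=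
  hA.1.eigenvectorUnitary.1 * Matrix.diagonal ((↑) ∘ (√·) ∘ hA.1.eigenvalues) *
  (star hA.1.eigenvectorUnitary : Matrix n n 𝕜)

namespace Matrix.PosSemidef

variable {n 𝕜 : Type*} [Fintype n] [DecidableEq n] [RCLike 𝕜] {A : Matrix n n 𝕜}

theorem sqrt_eq_conjStarAlgAut (hA : A.PosSemidef) :
    hA.sqrt = Unitary.conjStarAlgAut 𝕜 _ hA.1.eigenvectorUnitary
      (diagonal ((↑) ∘ (√·) ∘ hA.1.eigenvalues)) :=
  rfl

theorem sqrt_mul_self (hA : A.PosSemidef) : hA.sqrt * hA.sqrt = A := by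
  conv_rhs => rw [hA.1.spectral_theorem]
  rw [sqrt_eq_conjStarAlgAut, ← map_mul, diagonal_mul_diagonal]
  congr 2
  ext i
  simp [← RCLike.ofReal_mul, Real.mul_self_sqrt (hA.eigenvalues_nonneg i)]

theorem isHermitian_sqrt (hA : A.PosSemidef) : hA.sqrt.IsHermitian := by
  have hD : IsSelfAdjoint (diagonal ((↑) ∘ (√·) ∘ hA.1.eigenvalues : n → 𝕜)) :=
    isHermitian_diagonal_of_self_adjoint _ (by ext; simp)
  exact hD.map (Unitary.conjStarAlgAut 𝕜 _ hA.1.eigenvectorUnitary)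

end Matrix.PosSemidef

namespace Equiv.Perm

variable {ι : Type*}

def MutuallyOrthogonal (π : ι → Perm ι) : Prop :=
  ∀ k k', k ≠ k' → ∀ i, π k i ≠ π k' i

theorem MutuallyOrthogonal.bijective_apply [Finite ι] {π : ι → Perm ι}
    (hπ : MutuallyOrthogonal π) (i : ι) : Function.Bijective fun k ↦ π k i :=
  Finite.injective_iff_bijective.mp fun k k' h ↦ by_contra fun hne ↦ hπ k k' hne i h

theorem MutuallyOrthogonal.sum_apply_eq_sum [Fintype ι] {M : Type*} [AddCommMonoid M]
    {π : ι → Perm ι} (hπ : MutuallyOrthogonal π) (i : ι) (f : ι → M) :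
    ∑ k, f (π k i) = ∑ j, f j :=
  Fintype.sum_bijective _ (hπ.bijective_apply i) _ _ fun _ ↦ rfl

end Equiv.Perm

theorem sum_mul_comp_perm_le_sum_sq {ι α : Type*} [Fintype ι] [Semiring α] [LinearOrder α]
    [IsStrictOrderedRing α] [ExistsAddOfLE α] (w : ι → α) (σ : Equiv.Perm ι) :
    ∑ i, w i * w (σ i) ≤ ∑ i, w i ^ 2 := by
  simpa only [sq] using (monovary_self w).sum_mul_comp_perm_le_sum_mul (σ := σ)

section SymmetricOperators

open RCLike

variable {𝕜 E : Type*} [RCLike 𝕜] [NormedAddCommGroup E] [InnerProductSpace 𝕜 E]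

local notation "⟪" x ", " y "⟫" => inner 𝕜 x y

theorem ContinuousLinearMap.opNorm_le_of_norm_apply_sq_le {T : E →L[𝕜] E} {C : ℝ}
    (hC : 0 ≤ C) (h : ∀ v, ‖T v‖ ^ 2 ≤ C * re ⟪v, T v⟫) : ‖T‖ ≤ C := by
  refine T.opNorm_le_bound hC fun v ↦ ?_
  have hsq : ‖T v‖ * ‖T v‖ ≤ C * ‖v‖ * ‖T v‖ := calc
    ‖T v‖ * ‖T v‖ ≤ C * re ⟪v, T v⟫ := by rw [← sq]; exact h v
    _ ≤ C * (‖v‖ * ‖T v‖) :=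
      mul_le_mul_of_nonneg_left ((re_le_norm _).trans (norm_inner_le_norm _ _)) hC
    _ = C * ‖v‖ * ‖T v‖ := (mul_assoc _ _ _).symm
  rcases (norm_nonneg (T v)).eq_or_lt with h0 | hpos
  · rw [← h0]; positivity
  · exact le_of_mul_le_mul_right hsq hpos

theorem re_inner_mul_self_apply_le {P Q : E →L[𝕜] E} (hP : (P : E →ₗ[𝕜] E).IsSymmetric) (v : E) :
    re ⟪P (P v), Q (Q v)⟫ ≤ ‖P * Q‖ * (‖P v‖ * ‖Q v‖) := calc
  re ⟪P (P v), Q (Q v)⟫ = re ⟪P v, (P * Q) (Q v)⟫ := congrArg re (hP _ _)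
  _ ≤ ‖P v‖ * ‖(P * Q) (Q v)‖ := (re_le_norm _).trans (norm_inner_le_norm _ _)
  _ ≤ ‖P v‖ * (‖P * Q‖ * ‖Q v‖) := by gcongr; exact ContinuousLinearMap.le_opNorm _ _
  _ = ‖P * Q‖ * (‖P v‖ * ‖Q v‖) := by ring

variable {ι : Type*} [Fintype ι] {S : ι → E →L[𝕜] E}

theorem re_inner_sum_mul_self_apply (hS : ∀ i, (S i : E →ₗ[𝕜] E).IsSymmetric) (v : E) :
    re ⟪v, (∑ i, S i * S i) v⟫ = ∑ i, ‖S i v‖ ^ 2 := by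
  simp only [_root_.sum_apply, mul_apply_eq_comp, inner_sum, map_sum]
  refine Finset.sum_congr rfl fun i _ ↦ ?_
  exact (congrArg re (hS i _ _).symm).trans (inner_self_eq_norm_sq _)

theorem norm_sum_mul_self_apply_sq_le (hS : ∀ i, (S i : E →ₗ[𝕜] E).IsSymmetric) (v : E) :
    ‖(∑ i, S i * S i) v‖ ^ 2 ≤ ∑ i, ∑ j, ‖S i * S j‖ * (‖S i v‖ * ‖S j v‖) := by
  rw [← inner_self_eq_norm_sq (𝕜 := 𝕜)]
  simp only [_root_.sum_apply, mul_apply_eq_comp, sum_inner, map_sum]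
  simp only [inner_sum, map_sum]
  exact Finset.sum_le_sum fun i _ ↦ Finset.sum_le_sum fun j _ ↦ re_inner_mul_self_apply_le (hS i) v

theorem norm_sum_mul_self_le_sum_of_mutuallyOrthogonal (hS : ∀ i, (S i : E →ₗ[𝕜] E).IsSymmetric)
    {π : ι → Equiv.Perm ι} (hπ : Equiv.Perm.MutuallyOrthogonal π) {c : ι → ℝ}
    (hc : ∀ k i, ‖S i * S (π k i)‖ ≤ c k) :
    ‖∑ i, S i * S i‖ ≤ ∑ k, c k := by
  have hc₀ : ∀ k, 0 ≤ c k := fun k ↦ (norm_nonneg _).trans (hc k k)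
  refine ContinuousLinearMap.opNorm_le_of_norm_apply_sq_le
    (Finset.sum_nonneg fun k _ ↦ hc₀ k) fun v ↦ ?_
  set w : ι → ℝ := fun i ↦ ‖S i v‖
  calc ‖(∑ i, S i * S i) v‖ ^ 2 ≤ ∑ i, ∑ j, ‖S i * S j‖ * (w i * w j) :=
        norm_sum_mul_self_apply_sq_le hS v
    _ = ∑ i, ∑ k, ‖S i * S (π k i)‖ * (w i * w (π k i)) :=
        Finset.sum_congr rfl fun i _ ↦
          (hπ.sum_apply_eq_sum i fun j ↦ ‖S i * S j‖ * (w i * w j)).symm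
    _ = ∑ k, ∑ i, ‖S i * S (π k i)‖ * (w i * w (π k i)) := Finset.sum_comm
    _ ≤ ∑ k, c k * ∑ i, w i * w (π k i) := by
        refine Finset.sum_le_sum fun k _ ↦ ?_
        rw [Finset.mul_sum]
        exact Finset.sum_le_sum fun i _ ↦ by gcongr; exact hc k i
    _ ≤ ∑ k, c k * ∑ i, w i ^ 2 :=
        Finset.sum_le_sum fun k _ ↦
          mul_le_mul_of_nonneg_left (sum_mul_comp_perm_le_sum_sq w (π k)) (hc₀ k)
    _ = (∑ k, c k) * re ⟪v, (∑ i, S i * S i) v⟫ := by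
        rw [re_inner_sum_mul_self_apply hS, Finset.sum_mul]

end SymmetricOperators

theorem opNorm_sum_le_of_mutually_orthogonal_perms_general
    {d N : ℕ} (hN : 0 < N)
    (A : Fin N → Matrix (Fin d) (Fin d) ℂ)
    (hA : ∀ i, (A i).PosSemidef)
    (π : Fin N → Equiv.Perm (Fin N))
    (hπ : ∀ k k' : Fin N, k ≠ k' → ∀ i : Fin N, π k i ≠ π k' i) :
    opNorm (∑ i : Fin N, A i)
      ≤ ∑ k : Fin N,
          Finset.univ.sup' ⟨⟨0, hN⟩, Finset.mem_univ _⟩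
            (fun i : Fin N => opNorm ((hA i).sqrt * (hA (π k i)).sqrt)) := by
  set S : Fin N → EuclideanSpace ℂ (Fin d) →L[ℂ] EuclideanSpace ℂ (Fin d) :=
    fun i ↦ Matrix.toEuclideanCLM (𝕜 := ℂ) (hA i).sqrt
  have hsum : Matrix.toEuclideanCLM (𝕜 := ℂ) (∑ i, A i) = ∑ i, S i * S i := by
    simp only [S, map_sum, ← map_mul, Matrix.PosSemidef.sqrt_mul_self]
  have hS : ∀ i, (S i : EuclideanSpace ℂ (Fin d) →ₗ[ℂ] _).IsSymmetric := fun i ↦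
    Matrix.isSymmetric_toEuclideanLin_iff.mpr (hA i).isHermitian_sqrt
  rw [opNorm, hsum]
  refine norm_sum_mul_self_le_sum_of_mutuallyOrthogonal hS hπ fun k i ↦ ?_
  rw [← map_mul]
  exact Finset.le_sup' (fun i ↦ opNorm ((hA i).sqrt * (hA (π k i)).sqrt)) (Finset.mem_univ i)

/-- Lemma 2 of Tomamichel–Fehr–Kaniewski–Wehner: operator-norm bound on a sum of
positive semidefinite matrices via mutually orthogonal permutations. -/
theorem opNorm_sum_le_of_mutually_orthogonal_perms
    {d N : ℕ} (hd : 0 < d) (hN : 0 < N)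
    (A : Fin N → Matrix (Fin d) (Fin d) ℂ)
    (hA : ∀ i, (A i).PosSemidef)
    (π : Fin N → Equiv.Perm (Fin N))
    (hπ : ∀ k k' : Fin N, k ≠ k' → ∀ i : Fin N, π k i ≠ π k' i) :
    opNorm (∑ i : Fin N, A i)
      ≤ ∑ k : Fin N,
          Finset.univ.sup' ⟨⟨0, hN⟩, Finset.mem_univ _⟩
            (fun i : Fin N => opNorm ((hA i).sqrt * (hA (π k i)).sqrt)) :=
  opNorm_sum_le_of_mutually_orthogonal_perms_general hN A hA π hπ
end
end

section
/- Let T : V → V be an invertible linear map and let Tᵀ denote its transpose with respect to the pairing, i.e. the unique linear map satisfying ⟨Tᵀ x, y⟩ = ⟨x, T y⟩ for all x, y ∈ V. Let U_T be the linear map on EuclideanSpace ℂ V that permutes basis vectors by U_T e_x = e_{T x}. Then for every submodule A of V and all s, s' ∈ V: U_T |A_{s,s'}⟩ = |(T(A))_{T s, (T⁻¹)ᵀ s'}⟩, where T(A) is the image submodule of A under T. -/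
open scoped BigOperators Kronecker Classical ComplexOrder

noncomputable section

/-- The unitary permuting basis vectors by an invertible linear map `T`: `U_T e_x = e_{T x}`. -/
noncomputable def Umat {n : ℕ} (T : V n ≃ₗ[ZMod 2] V n) : Matrix (V n) (V n) ℂ :=
  Matrix.of fun x y => if x = T y then 1 else 0

lemma pairing_comm {n : ℕ} (x y : V n) : pairing x y = pairing y x := by
  simp [pairing, mul_comm]

lemma pairing_map_of_transpose_symm {n : ℕ} (T : V n ≃ₗ[ZMod 2] V n) (Tit : V n →ₗ[ZMod 2] V n)
    (hTit : ∀ x y : V n, pairing (Tit x) y = pairing x (T.symm y)) (x y : V n) :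
    pairing (T x) (Tit y) = pairing x y := by
  rw [pairing_comm, hTit, T.symm_apply_apply, pairing_comm]

lemma Umat_mulVec {n : ℕ} (T : V n ≃ₗ[ZMod 2] V n) (v : EuclideanSpace ℂ (V n)) :
    (Umat T).mulVec v = LinearIsometryEquiv.piLpCongrLeft 2 ℂ ℂ T.toEquiv v := by
  funext x
  rw [LinearIsometryEquiv.piLpCongrLeft_apply, Equiv.piCongrLeft'_apply]
  simp [Matrix.mulVec, dotProduct, Umat, ← LinearEquiv.symm_apply_eq]

lemma cosetState_map {n : ℕ} (T : V n ≃ₗ[ZMod 2] V n) (A : Submodule (ZMod 2) (V n))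
    (s s' t' : V n) (h : ∀ a ∈ A, pairing (T a) t' = pairing a s') :
    cosetState (A.map (T : V n →ₗ[ZMod 2] V n)) (T s) t'
      = LinearIsometryEquiv.piLpCongrLeft 2 ℂ ℂ T.toEquiv (cosetState A s s') := by
  let e := Submodule.equivMapOfInjective (T : V n →ₗ[ZMod 2] V n) T.injective A
  have hcard : Nat.card (A.map (T : V n →ₗ[ZMod 2] V n)) = Nat.card A :=
    Nat.card_congr e.symm.toEquiv
  rw [cosetState, cosetState, hcard, map_smul, map_sum, ← e.toEquiv.sum_comp]
  congr 1
  refine Finset.sum_congr rfl fun a _ => ?_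
  rw [map_smul, EuclideanSpace.piLpCongrLeft_single]
  simp [e, h a a.2]

theorem Umat_mulVec_cosetState_general
    {n : ℕ}
    (T : V n ≃ₗ[ZMod 2] V n) (Tit : V n →ₗ[ZMod 2] V n)
    (hTit : ∀ x y : V n, pairing (Tit x) y = pairing x (T.symm y))
    (A : Submodule (ZMod 2) (V n)) (s s' : V n) :
    (Umat T).mulVec (cosetState A s s')
      = (cosetState (A.map (T : V n →ₗ[ZMod 2] V n)) (T s) (Tit s') : EuclideanSpace ℂ (V n)) := by
  rw [Umat_mulVec, cosetState_map T A s s' (Tit s') fun a _ =>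
    pairing_map_of_transpose_symm T Tit hTit a s']

/-- Change of basis of coset states: `U_T |A_{s,s'}⟩ = |(T A)_{T s, (T⁻¹)ᵀ s'}⟩`, where
`(T⁻¹)ᵀ` is the transpose of `T⁻¹` with respect to the pairing. -/
theorem Umat_mulVec_cosetState
    {n : ℕ} (hn : 0 < n)
    (T : V n ≃ₗ[ZMod 2] V n) (Tit : V n →ₗ[ZMod 2] V n)
    (hTit : ∀ x y : V n, pairing (Tit x) y = pairing x (T.symm y))
    (A : Submodule (ZMod 2) (V n)) (s s' : V n) :
    (Umat T).mulVec (cosetState A s s')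
      = (cosetState (A.map (T : V n →ₗ[ZMod 2] V n)) (T s) (Tit s') : EuclideanSpace ℂ (V n)) :=
  Umat_mulVec_cosetState_general T Tit hTit A s s'
end
end

section
/- There exists a constant C > 0 such that for every even natural number n ≥ 2: ∑_{t=0}^{n/2} binom(n/2, t)² · 2^{−t} ≤ C · 2^{−√n} · binom(n, n/2), where √n denotes the real square root of n and the inequality is between real numbers. Equivalently, (1 / binom(n, n/2)) · ∑_{t=0}^{n/2} binom(n/2, t)² · 2^{−t} = O(2^{−√n}) as n → ∞ over even n. -/
open scoped BigOperators

lemma aux_sum_le (m : ℕ) :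
    ∑ t ∈ Finset.range (m + 1), ((m.choose t : ℝ)) ^ 2 * (2 : ℝ) ^ (-(t : ℝ))
      ≤ (3 : ℝ) ^ m := by
  have key : ∀ t ∈ Finset.range (m + 1),
      ((m.choose t : ℝ)) ^ 2 * (2 : ℝ) ^ (-(t : ℝ))
        ≤ (2 : ℝ) ^ m * ((1/2 : ℝ) ^ t * (1:ℝ) ^ (m - t) * (m.choose t : ℝ)) := by
    intro t ht
    have h1 : (m.choose t : ℝ) ≤ (2 : ℝ) ^ m := by
      have : m.choose t ≤ 2 ^ m := by
        calc m.choose t ≤ ∑ k ∈ Finset.range (m+1), m.choose k :=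
              Finset.single_le_sum (fun k _ => Nat.zero_le _) ht
          _ = 2 ^ m := Nat.sum_range_choose m
      exact_mod_cast this
    have h2 : (2 : ℝ) ^ (-(t : ℝ)) = (1/2 : ℝ) ^ t := by
      rw [show -(t:ℝ) = (-1) * (t:ℝ) by ring, Real.rpow_mul (by norm_num),
        Real.rpow_neg_one, Real.rpow_natCast]
      norm_num
    rw [h2, one_pow, mul_one]
    have hp : (0:ℝ) ≤ (1/2:ℝ) ^ t := by positivity
    calc ((m.choose t : ℝ)) ^ 2 * (1/2:ℝ) ^ t
        = (m.choose t : ℝ) * (m.choose t : ℝ) * (1/2:ℝ) ^ t := by ring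
      _ ≤ (2:ℝ) ^ m * (m.choose t : ℝ) * (1/2:ℝ) ^ t := by
          have h0 : (0:ℝ) ≤ (m.choose t : ℝ) := by positivity
          exact mul_le_mul_of_nonneg_right (mul_le_mul_of_nonneg_right h1 h0) hp
      _ = (2:ℝ) ^ m * ((1/2:ℝ) ^ t * (m.choose t : ℝ)) := by ring
  calc ∑ t ∈ Finset.range (m + 1), ((m.choose t : ℝ)) ^ 2 * (2 : ℝ) ^ (-(t : ℝ))
      ≤ ∑ t ∈ Finset.range (m + 1),
          (2 : ℝ) ^ m * ((1/2 : ℝ) ^ t * (1:ℝ) ^ (m - t) * (m.choose t : ℝ)) :=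
        Finset.sum_le_sum key
    _ = (2 : ℝ) ^ m * ((1/2 : ℝ) + 1) ^ m := by
        rw [← Finset.mul_sum, ← add_pow]
    _ = (3 : ℝ) ^ m := by
        rw [← mul_pow]; norm_num

lemma aux_rpow_sqrt (m : ℕ) :
    (2 : ℝ) ^ (Real.sqrt (2 * m)) ≤ 256 * (17/16 : ℝ) ^ m := by
  have hs : Real.sqrt (2 * m) ≤ (m : ℝ) / 16 + 8 := by
    rw [show ((m : ℝ) / 16 + 8) = Real.sqrt (((m:ℝ)/16 + 8)^2) by
      rw [Real.sqrt_sq (by positivity)]]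
    apply Real.sqrt_le_sqrt
    nlinarith [sq_nonneg ((m:ℝ)/16 - 8)]
  have h1 : (2 : ℝ) ^ (Real.sqrt (2 * m)) ≤ (2 : ℝ) ^ ((m : ℝ) / 16 + 8) :=
    Real.rpow_le_rpow_of_exponent_le (by norm_num) hs
  have h2 : (2 : ℝ) ^ ((m : ℝ) / 16 + 8) = ((2:ℝ) ^ ((1:ℝ)/16)) ^ m * 256 := by
    rw [Real.rpow_add (by norm_num)]
    congr 1
    · rw [← Real.rpow_natCast ((2:ℝ) ^ ((1:ℝ)/16)) m, ← Real.rpow_mul (by norm_num)]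
      ring_nf
    · norm_num
  have h3 : (2:ℝ) ^ ((1:ℝ)/16) ≤ 17/16 := by
    have h16 : ((2:ℝ) ^ ((1:ℝ)/16)) ^ (16:ℕ) ≤ (17/16 : ℝ) ^ (16:ℕ) := by
      rw [← Real.rpow_natCast ((2:ℝ) ^ ((1:ℝ)/16)) 16, ← Real.rpow_mul (by norm_num)]
      norm_num
    exact le_of_pow_le_pow_left₀ (by norm_num) (by norm_num) h16
  calc (2 : ℝ) ^ (Real.sqrt (2 * m)) ≤ ((2:ℝ) ^ ((1:ℝ)/16)) ^ m * 256 := h1.trans h2.le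
    _ ≤ (17/16 : ℝ) ^ m * 256 := by
        have : (0:ℝ) ≤ (2:ℝ) ^ ((1:ℝ)/16) := Real.rpow_nonneg (by norm_num) _
        gcongr
    _ = 256 * (17/16 : ℝ) ^ m := by ring

lemma aux_bernoulli (m : ℕ) :
    (3 : ℝ) ^ m * (256 * (17/16 : ℝ) ^ m) * (2 * m) ≤ 2048 * (4 : ℝ) ^ m := by
  have hb : (1 : ℝ) + m * (13/51) ≤ (1 + 13/51 : ℝ) ^ m := by
    have := one_add_mul_le_pow (a := (13/51 : ℝ)) (by norm_num) m
    linarith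
  have key : (2 * m : ℝ) ≤ 8 * (64/51 : ℝ) ^ m := by
    have : ((64:ℝ)/51) ^ m = (1 + 13/51 : ℝ) ^ m := by norm_num
    rw [this]
    nlinarith
  have h4 : (4:ℝ) ^ m = (64/51 : ℝ) ^ m * ((51/16:ℝ)) ^ m := by
    rw [← mul_pow]; norm_num
  have h51 : (3 : ℝ) ^ m * (17/16 : ℝ) ^ m = (51/16 : ℝ) ^ m := by
    rw [← mul_pow]; norm_num
  have hp : (0:ℝ) < (51/16 : ℝ) ^ m := by positivity
  calc (3 : ℝ) ^ m * (256 * (17/16 : ℝ) ^ m) * (2 * m)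
      = 256 * ((51/16:ℝ) ^ m) * (2*m) := by rw [← h51]; ring
    _ ≤ 256 * ((51/16:ℝ) ^ m) * (8 * (64/51 : ℝ) ^ m) := by
        apply mul_le_mul_of_nonneg_left key (by positivity)
    _ = 2048 * (4:ℝ) ^ m := by rw [h4]; ring

/-- `(1 / binom(n, n/2)) · ∑_{t=0}^{n/2} binom(n/2, t)² · 2^{−t} = O(2^{−√n})` over even `n`:
there is a constant `C > 0` such that for every even `n ≥ 2`,
`∑_{t=0}^{n/2} binom(n/2, t)² · 2^{−t} ≤ C · 2^{−√n} · binom(n, n/2)`. -/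
theorem sum_choose_sq_pow_le :
    ∃ C : ℝ, 0 < C ∧ ∀ n : ℕ, Even n → 2 ≤ n →
      ∑ t ∈ Finset.range (n / 2 + 1),
          ((n / 2).choose t : ℝ) ^ 2 * (2 : ℝ) ^ (-(t : ℝ))
        ≤ C * (2 : ℝ) ^ (-Real.sqrt n) * (n.choose (n / 2) : ℝ) := by
  refine ⟨2048, by norm_num, ?_⟩
  intro n hn h2
  obtain ⟨m, rfl⟩ := hn
  have hm : 1 ≤ m := by omega
  have hdiv : (m + m) / 2 = m := by omega
  rw [hdiv]
  have hnm : ((m + m : ℕ) : ℝ) = 2 * m := by push_cast; ring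
  -- central binom lower bound
  have hcb : (4 : ℝ) ^ m ≤ 2 * m * ((m + m).choose m : ℝ) := by
    have h := Nat.four_pow_le_two_mul_self_mul_centralBinom m hm
    rw [Nat.centralBinom_eq_two_mul_choose] at h
    have he : (2*m).choose m = (m+m).choose m := by rw [two_mul]
    rw [he] at h
    exact_mod_cast h
  have hS := aux_sum_le m
  have hsq := aux_rpow_sqrt m
  have hB := aux_bernoulli m
  -- rewrite 2^{-√n}
  have hpos : (0:ℝ) < (2 : ℝ) ^ (Real.sqrt (2 * m)) := Real.rpow_pos_of_pos (by norm_num) _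
  rw [hnm, Real.rpow_neg (by norm_num)]
  -- goal: S ≤ 2048 * (2^{√(2m)})⁻¹ * choose
  rw [show (2048 : ℝ) * ((2:ℝ) ^ (Real.sqrt (2*m)))⁻¹ * ((m + m).choose m : ℝ)
        = 2048 * ((m + m).choose m : ℝ) / ((2:ℝ) ^ (Real.sqrt (2*m))) by ring]
  rw [le_div_iff₀ hpos]
  have hmpos : (0:ℝ) < 2 * m := by positivity
  have hchain : (∑ t ∈ Finset.range (m + 1),
      ((m.choose t : ℝ)) ^ 2 * (2 : ℝ) ^ (-(t : ℝ))) * (2:ℝ) ^ (Real.sqrt (2*m)) * (2 * m)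
      ≤ 2048 * ((m + m).choose m : ℝ) * (2 * m) := by
    have hS0 : (0:ℝ) ≤ ∑ t ∈ Finset.range (m + 1),
        ((m.choose t : ℝ)) ^ 2 * (2 : ℝ) ^ (-(t : ℝ)) := by
      apply Finset.sum_nonneg; intro t _; positivity
    calc (∑ t ∈ Finset.range (m + 1),
        ((m.choose t : ℝ)) ^ 2 * (2 : ℝ) ^ (-(t : ℝ))) * (2:ℝ) ^ (Real.sqrt (2*m)) * (2 * m)
        ≤ (3:ℝ) ^ m * (256 * (17/16 : ℝ) ^ m) * (2 * m) := by
          apply mul_le_mul_of_nonneg_right _ (by positivity)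
          exact mul_le_mul hS hsq (by positivity) (by positivity)
      _ ≤ 2048 * (4:ℝ) ^ m := hB
      _ ≤ 2048 * (2 * m * ((m + m).choose m : ℝ)) := by
          apply mul_le_mul_of_nonneg_left _ (by norm_num)
          linarith
      _ = 2048 * ((m + m).choose m : ℝ) * (2 * m) := by ring
  exact le_of_mul_le_mul_right (by linarith [hchain]) hmpos
end
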